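/- arXiv:0812.0933 — 2 statements merged into one kernel-verified Lean document; each statement's English description precedes it below -/
import Mathlib

section
/- Let $g:\mathbb{R}^n\to\mathbb{R}$ be a multilinear polynomial of degree at most $d$ and let $D\subseteq\{1,\dots,n\}$ with $|D|=d$ and $|\hat g(D)|\ge 1$. Then for every $\varepsilon>0$, for $x$ uniform on $[-1,1]^n$, $\Pr[|g(x)|\le\varepsilon]\le\Pr\bigl[\,\bigl|\prod_{i\in D}x_i\bigr|\le\varepsilon\,\bigr]$; that is, among all such polynomials the monomial $x_D$ is the worst case. -/
open MeasureTheory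

/-- The uniform probability measure on the cube `[-c,c]^n`. -/
noncomputable def cubeUnif (n : ℕ) (c : ℝ) : Measure (Fin n → ℝ) :=
  ((ENNReal.ofReal (2 * c)) ^ n)⁻¹ •
    Measure.pi (fun _ : Fin n => volume.restrict (Set.Icc (-c) c))

/-! ### Auxiliary definitions -/

/-- The multilinear polynomial with coefficients `g`. -/
noncomputable def polyFun {n : ℕ} (g : Finset (Fin n) → ℝ) (x : Fin n → ℝ) : ℝ :=
  ∑ S : Finset (Fin n), g S * ∏ j ∈ S, x j

/-- Coefficients of the part of `g` containing the variable `i`, with `i` factored out. -/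
noncomputable def coefL {m : ℕ} (i : Fin (m+1)) (g : Finset (Fin (m+1)) → ℝ)
    (T : Finset (Fin m)) : ℝ :=
  g (insert i (T.map i.succAboveEmb))

/-- Coefficients of the part of `g` not containing the variable `i`. -/
noncomputable def coefR {m : ℕ} (i : Fin (m+1)) (g : Finset (Fin (m+1)) → ℝ)
    (T : Finset (Fin m)) : ℝ :=
  g (T.map i.succAboveEmb)

/-! ### One-dimensional anticoncentration -/

lemma interval_eq (a b ε : ℝ) (ha : 0 < a) :
    {t : ℝ | |t * a + b| ≤ ε} = Set.Icc ((-ε - b)/a) ((ε - b)/a) := by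
  ext t
  simp only [Set.mem_setOf_eq, abs_le, Set.mem_Icc, div_le_iff₀ ha, le_div_iff₀ ha]
  constructor <;> rintro ⟨h1, h2⟩ <;> constructor <;> linarith

lemma oneDim_pos (a b ε : ℝ) (ha : 0 < a) :
    (volume.restrict (Set.Icc (-1:ℝ) 1)) {t | |t * a + b| ≤ ε}
      ≤ (volume.restrict (Set.Icc (-1:ℝ) 1)) {t | |t * a| ≤ ε} := by
  have h2 : {t : ℝ | |t * a| ≤ ε} = Set.Icc ((-ε - 0)/a) ((ε - 0)/a) := by
    rw [← interval_eq a 0 ε ha]; simp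
  rw [interval_eq a b ε ha, h2, Measure.restrict_apply' measurableSet_Icc,
    Measure.restrict_apply' measurableSet_Icc, Set.Icc_inter_Icc, Set.Icc_inter_Icc,
    Real.volume_Icc, Real.volume_Icc]
  apply ENNReal.ofReal_le_ofReal
  have e1 : (ε - 0)/a = ε/a := by ring
  have e2 : (-ε - 0)/a = -(ε/a) := by ring
  rw [e1, e2, max_neg_neg]
  have hvu : (ε - b)/a - (-ε - b)/a = 2 * (ε/a) := by
    field_simp
    ring
  have t1 : min ((ε - b)/a) 1 - max ((-ε - b)/a) (-1) ≤ 2 := by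
    have := min_le_right ((ε - b)/a) 1; have := le_max_right ((-ε - b)/a) (-1); linarith
  have t2 : min ((ε - b)/a) 1 - max ((-ε - b)/a) (-1) ≤ 2 * (ε/a) := by
    have := min_le_left ((ε - b)/a) 1; have := le_max_left ((-ε - b)/a) (-1); linarith
  rcases le_total (ε/a) 1 with h | h
  · rw [min_eq_left h]; linarith
  · rw [min_eq_right h]; linarith

lemma oneDim (a b ε : ℝ) (hε : 0 < ε) :
    (volume.restrict (Set.Icc (-1:ℝ) 1)) {t | |t * a + b| ≤ ε}
      ≤ (volume.restrict (Set.Icc (-1:ℝ) 1)) {t | |t * a| ≤ ε} := by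
  rcases lt_trichotomy a 0 with ha | rfl | ha
  · have e1 : {t : ℝ | |t * a + b| ≤ ε} = {t : ℝ | |t * (-a) + (-b)| ≤ ε} := by
      ext t
      rw [Set.mem_setOf_eq, Set.mem_setOf_eq, ← abs_neg (t * (-a) + (-b))]
      have : -(t * (-a) + (-b)) = t * a + b := by ring
      rw [this]
    have e2 : {t : ℝ | |t * a| ≤ ε} = {t : ℝ | |t * (-a)| ≤ ε} := by
      ext t
      rw [Set.mem_setOf_eq, Set.mem_setOf_eq, ← abs_neg (t * (-a))]
      have : -(t * (-a)) = t * a := by ring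
      rw [this]
    rw [e1, e2]
    exact oneDim_pos (-a) (-b) ε (by linarith)
  · have e2 : {t : ℝ | |t * (0:ℝ)| ≤ ε} = Set.univ := by
      ext t; simp [hε.le]
    rw [e2]
    exact measure_mono (Set.subset_univ _)
  · exact oneDim_pos a b ε ha

/-! ### Combinatorial lemmas about `succAbove` -/

lemma map_emb_not_mem {m : ℕ} (i : Fin (m+1)) (T : Finset (Fin m)) :
    i ∉ T.map i.succAboveEmb := by
  intro h
  obtain ⟨a, _, ha⟩ := Finset.mem_map.mp h
  exact Fin.succAbove_ne i a ha

lemma preimage_map {m : ℕ} (i : Fin (m+1)) (T : Finset (Fin m)) :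
    (T.map i.succAboveEmb).preimage i.succAbove Fin.succAbove_right_injective.injOn = T := by
  ext a
  simp only [Finset.mem_preimage, Finset.mem_map]
  constructor
  · rintro ⟨a', ha', h⟩
    cases Fin.succAbove_right_injective (p := i) h
    exact ha'
  · intro ha
    exact ⟨a, ha, rfl⟩

lemma map_preimage {m : ℕ} (i : Fin (m+1)) (S : Finset (Fin (m+1))) (hiS : i ∉ S) :
    (S.preimage i.succAbove Fin.succAbove_right_injective.injOn).map i.succAboveEmb = S := by
  ext b
  simp only [Finset.mem_map, Finset.mem_preimage]
  constructor
  · rintro ⟨a, ha, rfl⟩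
    exact ha
  · intro hb
    have hbi : b ≠ i := by rintro rfl; exact hiS hb
    obtain ⟨a, ha⟩ := Fin.exists_succAbove_eq hbi
    exact ⟨a, by simpa [ha] using hb, ha⟩

lemma prod_preimage_eq {m : ℕ} (i : Fin (m+1)) (S : Finset (Fin (m+1))) (hiS : i ∉ S)
    (x : Fin (m+1) → ℝ) :
    ∏ j ∈ S, x j
      = ∏ j ∈ S.preimage i.succAbove Fin.succAbove_right_injective.injOn,
          x (i.succAbove j) := by
  have h1 := map_preimage i S hiS
  have h2 := Finset.prod_map (S.preimage i.succAbove Fin.succAbove_right_injective.injOn)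
    i.succAboveEmb x
  rw [h1] at h2
  simpa only [Fin.coe_succAboveEmb] using h2

lemma split_prod {m : ℕ} (i : Fin (m+1)) (D : Finset (Fin (m+1))) (hi : i ∈ D)
    (x : Fin (m+1) → ℝ) :
    ∏ j ∈ D, x j
      = x i * ∏ j ∈ (D.erase i).preimage i.succAbove Fin.succAbove_right_injective.injOn,
          x (i.succAbove j) := by
  rw [← prod_preimage_eq i (D.erase i) (Finset.notMem_erase i D) x,
    Finset.mul_prod_erase D x hi]

lemma split_sum {m : ℕ} (i : Fin (m+1)) (g : Finset (Fin (m+1)) → ℝ) (x : Fin (m+1) → ℝ) :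
    polyFun g x
      = x i * polyFun (coefL i g) (fun j => x (i.succAbove j))
        + polyFun (coefR i g) (fun j => x (i.succAbove j)) := by
  classical
  unfold polyFun coefL coefR
  rw [Finset.mul_sum,
    ← Finset.sum_filter_add_sum_filter_not Finset.univ (fun S => i ∈ S)
      (fun S => g S * ∏ j ∈ S, x j)]
  congr 1
  · refine Finset.sum_nbij'
      (fun S => (S.erase i).preimage i.succAbove Fin.succAbove_right_injective.injOn)
      (fun T => insert i (T.map i.succAboveEmb))
      (fun S _ => Finset.mem_univ _) (fun T _ => ?_) (fun S hS => ?_) (fun T _ => ?_)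
      (fun S hS => ?_)
    · simp only [Finset.mem_filter, Finset.mem_univ, true_and]
      exact Finset.mem_insert_self i _
    · show insert i (((S.erase i).preimage i.succAbove
        Fin.succAbove_right_injective.injOn).map i.succAboveEmb) = S
      rw [map_preimage i _ (Finset.notMem_erase i S),
        Finset.insert_erase (Finset.mem_filter.mp hS).2]
    · show ((insert i (T.map i.succAboveEmb)).erase i).preimage i.succAbove
        Fin.succAbove_right_injective.injOn = T
      rw [Finset.erase_insert (map_emb_not_mem i T), preimage_map]
    · have hiS : i ∈ S := (Finset.mem_filter.mp hS).2
      show g S * ∏ j ∈ S, x j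
        = x i * (g (insert i (((S.erase i).preimage i.succAbove
            Fin.succAbove_right_injective.injOn).map i.succAboveEmb))
          * ∏ j ∈ (S.erase i).preimage i.succAbove Fin.succAbove_right_injective.injOn,
              x (i.succAbove j))
      rw [map_preimage i _ (Finset.notMem_erase i S), Finset.insert_erase hiS,
        ← prod_preimage_eq i (S.erase i) (Finset.notMem_erase i S) x,
        ← Finset.mul_prod_erase S x hiS]
      ring
  · refine Finset.sum_nbij'
      (fun S => S.preimage i.succAbove Fin.succAbove_right_injective.injOn)
      (fun T => T.map i.succAboveEmb)
      (fun S _ => Finset.mem_univ _) (fun T _ => ?_) (fun S hS => ?_) (fun T _ => ?_)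
      (fun S hS => ?_)
    · simp only [Finset.mem_filter, Finset.mem_univ, true_and]
      exact map_emb_not_mem i T
    · exact map_preimage i S (Finset.mem_filter.mp hS).2
    · exact preimage_map i T
    · have hiS : i ∉ S := (Finset.mem_filter.mp hS).2
      show g S * ∏ j ∈ S, x j
        = g ((S.preimage i.succAbove Fin.succAbove_right_injective.injOn).map i.succAboveEmb)
          * ∏ j ∈ S.preimage i.succAbove Fin.succAbove_right_injective.injOn,
              x (i.succAbove j)
      rw [map_preimage i S hiS, ← prod_preimage_eq i S hiS x]

/-! ### Measurability -/

lemma poly_measurable {n : ℕ} (g : Finset (Fin n) → ℝ) :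
    Measurable (polyFun g) :=
  Finset.measurable_sum _ fun S _ =>
    (Finset.measurable_prod S fun j _ => measurable_pi_apply j).const_mul _

lemma mono_measurable {n : ℕ} (D : Finset (Fin n)) :
    Measurable fun x : Fin n → ℝ => ∏ j ∈ D, x j :=
  Finset.measurable_prod D fun j _ => measurable_pi_apply j

/-! ### The inductive step -/

lemma key_step {m : ℕ} (i : Fin (m+1)) (g : Finset (Fin (m+1)) → ℝ)
    (D : Finset (Fin (m+1))) (hi : i ∈ D) (ε : ℝ) (hε : 0 < ε)
    (hIH : ∀ ε' : ℝ, 0 < ε' →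
      Measure.pi (fun _ : Fin m => volume.restrict (Set.Icc (-1:ℝ) 1))
          {y : Fin m → ℝ | |polyFun (coefL i g) y| ≤ ε'}
        ≤ Measure.pi (fun _ : Fin m => volume.restrict (Set.Icc (-1:ℝ) 1))
            {y : Fin m → ℝ |
              |∏ j ∈ (D.erase i).preimage i.succAbove Fin.succAbove_right_injective.injOn, y j|
                ≤ ε'}) :
    Measure.pi (fun _ : Fin (m+1) => volume.restrict (Set.Icc (-1:ℝ) 1))
        {x : Fin (m+1) → ℝ | |polyFun g x| ≤ ε}
      ≤ Measure.pi (fun _ : Fin (m+1) => volume.restrict (Set.Icc (-1:ℝ) 1))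
          {x : Fin (m+1) → ℝ | |∏ j ∈ D, x j| ≤ ε} := by
  classical
  have hc : Measurable (polyFun (coefL i g)) := poly_measurable _
  have hr : Measurable (polyFun (coefR i g)) := poly_measurable _
  have hm : Measurable fun y : Fin m → ℝ =>
      ∏ j ∈ (D.erase i).preimage i.succAbove Fin.succAbove_right_injective.injOn, y j :=
    mono_measurable _
  have hmap := measurePreserving_piFinSuccAbove
    (fun _ : Fin (m+1) => volume.restrict (Set.Icc (-1:ℝ) 1)) i
  have hs₁ : MeasurableSet {p : ℝ × (Fin m → ℝ) |
      |p.1 * polyFun (coefL i g) p.2 + polyFun (coefR i g) p.2| ≤ ε} :=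
    measurableSet_le ((measurable_fst.mul (hc.comp measurable_snd)).add
      (hr.comp measurable_snd)).abs measurable_const
  have hs₂ : MeasurableSet {p : ℝ × (Fin m → ℝ) | |p.1 * polyFun (coefL i g) p.2| ≤ ε} :=
    measurableSet_le (measurable_fst.mul (hc.comp measurable_snd)).abs measurable_const
  have hs₃ : MeasurableSet {p : ℝ × (Fin m → ℝ) |
      |p.1 * ∏ j ∈ (D.erase i).preimage i.succAbove Fin.succAbove_right_injective.injOn,
        p.2 j| ≤ ε} :=
    measurableSet_le (measurable_fst.mul (hm.comp measurable_snd)).abs measurable_const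
  calc
    Measure.pi (fun _ : Fin (m+1) => volume.restrict (Set.Icc (-1:ℝ) 1))
        {x : Fin (m+1) → ℝ | |polyFun g x| ≤ ε}
      = ((volume.restrict (Set.Icc (-1:ℝ) 1)).prod
          (Measure.pi (fun _ : Fin m => volume.restrict (Set.Icc (-1:ℝ) 1))))
          {p : ℝ × (Fin m → ℝ) |
            |p.1 * polyFun (coefL i g) p.2 + polyFun (coefR i g) p.2| ≤ ε} := by
        rw [← hmap.map_eq, MeasurableEquiv.map_apply]
        congr 1
        ext x
        simp only [Set.mem_setOf_eq, Set.mem_preimage]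
        rw [split_sum i g x]
        exact Iff.rfl
    _ = ∫⁻ y, (volume.restrict (Set.Icc (-1:ℝ) 1))
          {t : ℝ | |t * polyFun (coefL i g) y + polyFun (coefR i g) y| ≤ ε}
          ∂(Measure.pi (fun _ : Fin m => volume.restrict (Set.Icc (-1:ℝ) 1))) := by
        rw [Measure.prod_apply_symm hs₁]
        rfl
    _ ≤ ∫⁻ y, (volume.restrict (Set.Icc (-1:ℝ) 1))
          {t : ℝ | |t * polyFun (coefL i g) y| ≤ ε}
          ∂(Measure.pi (fun _ : Fin m => volume.restrict (Set.Icc (-1:ℝ) 1))) :=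
        lintegral_mono fun y => oneDim (polyFun (coefL i g) y) (polyFun (coefR i g) y) ε hε
    _ = ((volume.restrict (Set.Icc (-1:ℝ) 1)).prod
          (Measure.pi (fun _ : Fin m => volume.restrict (Set.Icc (-1:ℝ) 1))))
          {p : ℝ × (Fin m → ℝ) | |p.1 * polyFun (coefL i g) p.2| ≤ ε} := by
        rw [Measure.prod_apply_symm hs₂]
        rfl
    _ = ∫⁻ t, (Measure.pi (fun _ : Fin m => volume.restrict (Set.Icc (-1:ℝ) 1)))
          {y : Fin m → ℝ | |t * polyFun (coefL i g) y| ≤ ε}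
          ∂(volume.restrict (Set.Icc (-1:ℝ) 1)) := by
        rw [Measure.prod_apply hs₂]
        rfl
    _ ≤ ∫⁻ t, (Measure.pi (fun _ : Fin m => volume.restrict (Set.Icc (-1:ℝ) 1)))
          {y : Fin m → ℝ |
            |t * ∏ j ∈ (D.erase i).preimage i.succAbove Fin.succAbove_right_injective.injOn,
              y j| ≤ ε}
          ∂(volume.restrict (Set.Icc (-1:ℝ) 1)) := by
        apply lintegral_mono_ae
        have hν0 : (volume.restrict (Set.Icc (-1:ℝ) 1)) {(0:ℝ)} = 0 := by
          rw [Measure.restrict_apply' measurableSet_Icc]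
          exact measure_mono_null Set.inter_subset_left Real.volume_singleton
        have hane : ∀ᵐ t ∂(volume.restrict (Set.Icc (-1:ℝ) 1)), t ≠ (0:ℝ) := by
          rw [ae_iff]
          simpa using hν0
        filter_upwards [hane] with t ht
        have hta : 0 < |t| := abs_pos.mpr ht
        have hset1 : {y : Fin m → ℝ | |t * polyFun (coefL i g) y| ≤ ε}
            = {y : Fin m → ℝ | |polyFun (coefL i g) y| ≤ ε / |t|} := by
          ext y
          rw [Set.mem_setOf_eq, Set.mem_setOf_eq, abs_mul,
            mul_comm |t| (|polyFun (coefL i g) y|), ← le_div_iff₀ hta]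
        have hset2 : {y : Fin m → ℝ |
              |t * ∏ j ∈ (D.erase i).preimage i.succAbove
                Fin.succAbove_right_injective.injOn, y j| ≤ ε}
            = {y : Fin m → ℝ |
              |∏ j ∈ (D.erase i).preimage i.succAbove
                Fin.succAbove_right_injective.injOn, y j| ≤ ε / |t|} := by
          ext y
          rw [Set.mem_setOf_eq, Set.mem_setOf_eq, abs_mul,
            mul_comm |t| _, ← le_div_iff₀ hta]
        rw [hset1, hset2]
        exact hIH (ε / |t|) (div_pos hε hta)
    _ = ((volume.restrict (Set.Icc (-1:ℝ) 1)).prod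
          (Measure.pi (fun _ : Fin m => volume.restrict (Set.Icc (-1:ℝ) 1))))
          {p : ℝ × (Fin m → ℝ) |
            |p.1 * ∏ j ∈ (D.erase i).preimage i.succAbove
              Fin.succAbove_right_injective.injOn, p.2 j| ≤ ε} := by
        rw [Measure.prod_apply hs₃]
        rfl
    _ = Measure.pi (fun _ : Fin (m+1) => volume.restrict (Set.Icc (-1:ℝ) 1))
          {x : Fin (m+1) → ℝ | |∏ j ∈ D, x j| ≤ ε} := by
        rw [← hmap.map_eq, MeasurableEquiv.map_apply]
        congr 1
        ext x
        simp only [Set.mem_setOf_eq, Set.mem_preimage]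
        rw [split_prod i D hi x]
        exact Iff.rfl

/-! ### The main induction -/

lemma key (d : ℕ) :
    ∀ (n : ℕ) (g : Finset (Fin n) → ℝ),
      (∀ S : Finset (Fin n), d < S.card → g S = 0) →
      ∀ D : Finset (Fin n), D.card = d → 1 ≤ |g D| →
      ∀ ε : ℝ, 0 < ε →
      Measure.pi (fun _ : Fin n => volume.restrict (Set.Icc (-1:ℝ) 1))
          {x : Fin n → ℝ | |polyFun g x| ≤ ε}
        ≤ Measure.pi (fun _ : Fin n => volume.restrict (Set.Icc (-1:ℝ) 1))
            {x : Fin n → ℝ | |∏ i ∈ D, x i| ≤ ε} := by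
  induction d with
  | zero =>
    intro n g hdeg D hcard hbig ε hε
    have hDe : D = ∅ := Finset.card_eq_zero.mp hcard
    subst hDe
    have hsum : ∀ x : Fin n → ℝ, polyFun g x = g ∅ := by
      intro x
      unfold polyFun
      rw [Finset.sum_eq_single ∅]
      · simp
      · intro S _ hS
        rw [hdeg S (Finset.card_pos.mpr (Finset.nonempty_iff_ne_empty.mpr hS))]
        ring
      · intro h
        exact absurd (Finset.mem_univ ∅) h
    by_cases h1 : 1 ≤ ε
    · have : {x : Fin n → ℝ | |∏ j ∈ (∅ : Finset (Fin n)), x j| ≤ ε} = Set.univ := by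
        ext x; simp [h1]
      rw [this]
      exact measure_mono (Set.subset_univ _)
    · have : {x : Fin n → ℝ | |polyFun g x| ≤ ε} = ∅ := by
        ext x
        simp only [Set.mem_setOf_eq, hsum, Set.mem_empty_iff_false, iff_false, not_le]
        have := not_le.mp h1
        linarith
      rw [this]
      simp
  | succ d IH =>
    intro n g hdeg D hcard hbig ε hε
    cases n with
    | zero =>
      have h0 := Finset.card_le_univ D
      rw [hcard] at h0
      simp [Finset.card_univ] at h0
    | succ m =>
      have hpos : 0 < D.card := by rw [hcard]; omega
      obtain ⟨i, hi⟩ := Finset.card_pos.mp hpos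
      have hD'card :
          ((D.erase i).preimage i.succAbove Fin.succAbove_right_injective.injOn).card = d := by
        have h1 : (((D.erase i).preimage i.succAbove
            Fin.succAbove_right_injective.injOn).map i.succAboveEmb).card
            = ((D.erase i).preimage i.succAbove Fin.succAbove_right_injective.injOn).card :=
          Finset.card_map _
        rw [map_preimage i (D.erase i) (Finset.notMem_erase i D)] at h1
        rw [← h1, Finset.card_erase_of_mem hi, hcard]
        omega
      have hdeg' : ∀ T : Finset (Fin m), d < T.card → coefL i g T = 0 := by
        intro T hT
        apply hdeg
        rw [Finset.card_insert_of_notMem (map_emb_not_mem i T), Finset.card_map]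
        omega
      have hbig' : 1 ≤ |coefL i g
          ((D.erase i).preimage i.succAbove Fin.succAbove_right_injective.injOn)| := by
        unfold coefL
        rw [map_preimage i (D.erase i) (Finset.notMem_erase i D), Finset.insert_erase hi]
        exact hbig
      exact key_step i g D hi ε hε fun ε' hε' =>
        IH m (coefL i g) hdeg'
          ((D.erase i).preimage i.succAbove Fin.succAbove_right_injective.injOn)
          hD'card hbig' ε' hε'

theorem stmt1 (n d : ℕ)
    (g : Finset (Fin n) → ℝ)
    (hdeg : ∀ S : Finset (Fin n), d < S.card → g S = 0)
    (D : Finset (Fin n)) (hD : D.card = d) (hbig : 1 ≤ |g D|)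
    (ε : ℝ) (hε : 0 < ε) :
    cubeUnif n 1 {x : Fin n → ℝ | |∑ S : Finset (Fin n), g S * ∏ i ∈ S, x i| ≤ ε}
      ≤ cubeUnif n 1 {x : Fin n → ℝ | |∏ i ∈ D, x i| ≤ ε} := by
  have hk := key d n g hdeg D hD hbig ε hε
  simp only [cubeUnif, Measure.smul_apply, smul_eq_mul]
  have h1 : (1:ℝ) = 1 := rfl
  norm_num
  exact mul_le_mul_right hk _
end

section
/- Let $d\ge 1$ and let $x_1,\dots,x_d$ be independent and uniformly distributed on $[-1,1]$. Then for every $\varepsilon>0$, $\Pr[|x_1x_2\cdots x_d|\le\varepsilon]\le 2^d\sqrt{\varepsilon}$. -/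
open MeasureTheory

open Set in
private lemma lintegral_pi_prod_const' {n : ℕ} (ν : Measure ℝ) [SigmaFinite ν] {f : ℝ → ENNReal}
    (hf : Measurable f) :
    ∫⁻ x : Fin n → ℝ, ∏ i, f (x i) ∂(Measure.pi fun _ => ν) = (∫⁻ y, f y ∂ν) ^ n := by
  induction n with
  | zero => simp [lintegral_const]
  | succ n ih =>
      have hmp := (measurePreserving_piFinSuccAbove (fun _ : Fin (n + 1) => ν) 0).symm
      rw [hmp.lintegral_map_equiv (fun x => ∏ i, f (x i)) _]
      simp_rw [MeasurableEquiv.piFinSuccAbove_symm_apply, Fin.insertNthEquiv,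
        Fin.prod_univ_succ, Fin.insertNth_zero]
      simp only [Equiv.coe_fn_mk, Fin.cons_zero, Fin.cons_succ, cast_eq]
      have hmeas : Measurable fun z : Fin n → ℝ => ∏ j, f (z j) :=
        Finset.measurable_prod _ fun j _ => hf.comp (measurable_pi_apply j)
      rw [lintegral_prod_mul hf.aemeasurable hmeas.aemeasurable, ih, pow_succ, mul_comm]

open Set in
private lemma coord_integral' :
    ∫⁻ x in Icc (-1 : ℝ) 1, (ENNReal.ofReal (Real.sqrt |x|))⁻¹ = ENNReal.ofReal 4 := by
  have hrgt : (-1 : ℝ) < -(1/2) := by norm_num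
  have h01 : IntervalIntegrable (fun x : ℝ => |x| ^ (-(1/2) : ℝ)) volume 0 1 := by
    rw [intervalIntegrable_iff]
    refine (intervalIntegrable_iff.mp
      (intervalIntegral.intervalIntegrable_rpow' hrgt (a := 0) (b := 1))).congr_fun
      (fun x hx => ?_) measurableSet_uIoc
    rw [Set.uIoc_of_le (by norm_num : (0:ℝ) ≤ 1)] at hx
    rw [abs_of_nonneg hx.1.le]
  have heq : (fun x : ℝ => |(-x)| ^ (-(1/2) : ℝ)) = (fun x : ℝ => |x| ^ (-(1/2) : ℝ)) := by
    funext x; rw [abs_neg]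
  have hneg : IntervalIntegrable (fun x : ℝ => |x| ^ (-(1/2) : ℝ)) volume (-1) 0 := by
    have := (IntervalIntegrable.iff_comp_neg (f := fun x : ℝ => |x| ^ (-(1/2) : ℝ)) (a := 0) (b := 1) (by simp)).mp h01
    simp only [neg_zero, neg_neg] at this
    rw [heq] at this
    exact this.symm
  have hval01 : ∫ x in (0:ℝ)..1, |x| ^ (-(1/2) : ℝ) = 2 := by
    have hcg : ∫ x in (0:ℝ)..1, |x| ^ (-(1/2) : ℝ) = ∫ x in (0:ℝ)..1, x ^ (-(1/2) : ℝ) := by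
      refine intervalIntegral.integral_congr fun x hx => ?_
      rw [Set.uIcc_of_le (by norm_num : (0:ℝ) ≤ 1)] at hx
      rw [abs_of_nonneg hx.1]
    rw [hcg, integral_rpow (Or.inl hrgt), Real.one_rpow, Real.zero_rpow (by norm_num)]
    norm_num
  have hvalneg : ∫ x in (-1:ℝ)..0, |x| ^ (-(1/2) : ℝ) = 2 := by
    have := intervalIntegral.integral_comp_neg (a := 0) (b := 1)
      (fun x : ℝ => |x| ^ (-(1/2) : ℝ))
    rw [show (fun x : ℝ => |(-x)| ^ (-(1/2) : ℝ)) = (fun x : ℝ => |x| ^ (-(1/2) : ℝ)) from heq]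
      at this
    simp only [neg_zero, neg_neg] at this
    rw [← this, hval01]
  have htot : ∫ x in (-1:ℝ)..1, |x| ^ (-(1/2) : ℝ) = 4 := by
    rw [← intervalIntegral.integral_add_adjacent_intervals hneg h01, hval01, hvalneg]
    norm_num
  have hInt : IntegrableOn (fun x : ℝ => |x| ^ (-(1/2) : ℝ)) (Icc (-1 : ℝ) 1) := by
    have hI := hneg.trans h01
    rw [intervalIntegrable_iff, Set.uIoc_of_le (by norm_num : (-1:ℝ) ≤ 1)] at hI
    exact (integrableOn_Icc_iff_integrableOn_Ioc).mpr hI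
  have hsetint : ∫ x in Icc (-1 : ℝ) 1, |x| ^ (-(1/2) : ℝ) = 4 := by
    rw [integral_Icc_eq_integral_Ioc,
      ← intervalIntegral.integral_of_le (by norm_num : (-1:ℝ) ≤ 1)]
    exact htot
  have hae : ∀ᵐ x ∂(volume.restrict (Icc (-1 : ℝ) 1)),
      (ENNReal.ofReal (Real.sqrt |x|))⁻¹ = ENNReal.ofReal (|x| ^ (-(1/2) : ℝ)) := by
    have h0 : ∀ᵐ (x : ℝ) ∂volume, x ≠ 0 := by
      rw [ae_iff]
      simpa using Real.volume_singleton (a := 0)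
    filter_upwards [ae_restrict_of_ae h0] with x hx
    have hpos : 0 < Real.sqrt |x| := Real.sqrt_pos.mpr (abs_pos.mpr hx)
    rw [← ENNReal.ofReal_inv_of_pos hpos]
    congr 1
    rw [Real.sqrt_eq_rpow, ← Real.rpow_neg (abs_nonneg x)]
  rw [lintegral_congr_ae hae,
    ← ofReal_integral_eq_lintegral_ofReal hInt
      (Filter.Eventually.of_forall fun x => Real.rpow_nonneg (abs_nonneg x) _), hsetint]

private lemma prod_inv_sqrt' {ι : Type*} [DecidableEq ι] (s : Finset ι) (x : ι → ℝ) :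
    (ENNReal.ofReal (Real.sqrt |∏ i ∈ s, x i|))⁻¹
      = ∏ i ∈ s, (ENNReal.ofReal (Real.sqrt |x i|))⁻¹ := by
  induction s using Finset.induction with
  | empty => simp
  | insert a s h ih =>
      rw [Finset.prod_insert h, Finset.prod_insert h, abs_mul,
        Real.sqrt_mul (abs_nonneg _), ENNReal.ofReal_mul (Real.sqrt_nonneg _),
        ENNReal.mul_inv (Or.inr ENNReal.ofReal_ne_top) (Or.inl ENNReal.ofReal_ne_top), ih]

theorem stmt2 (d : ℕ) (hd : 1 ≤ d) (ε : ℝ) (hε : 0 < ε) :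
    cubeUnif d 1 {x : Fin d → ℝ | |∏ i, x i| ≤ ε}
      ≤ ENNReal.ofReal (2 ^ d * Real.sqrt ε) := by
  set ν : Measure ℝ := volume.restrict (Set.Icc (-1 : ℝ) 1) with hν
  set μ : Measure (Fin d → ℝ) := Measure.pi (fun _ : Fin d => ν) with hμ
  set S : Set (Fin d → ℝ) := {x | |∏ i, x i| ≤ ε} with hSdef
  set c : ENNReal := ENNReal.ofReal (Real.sqrt ε) with hc
  have hf_meas : Measurable (fun y : ℝ => (ENNReal.ofReal (Real.sqrt |y|))⁻¹) :=
    ((Real.continuous_sqrt.measurable.comp measurable_abs).ennreal_ofReal).inv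
  have hF_meas : Measurable (fun x : Fin d → ℝ => ∏ i, (ENNReal.ofReal (Real.sqrt |x i|))⁻¹) :=
    Finset.measurable_prod _ fun i _ => hf_meas.comp (measurable_pi_apply i)
  have key : μ S * c⁻¹ ≤ (ENNReal.ofReal 4) ^ d := by
    calc μ S * c⁻¹ = ∫⁻ _x in S, c⁻¹ ∂μ := by rw [setLIntegral_const, mul_comm]
    _ ≤ ∫⁻ x in S, ∏ i, (ENNReal.ofReal (Real.sqrt |x i|))⁻¹ ∂μ := by
        refine setLIntegral_mono hF_meas fun x hx => ?_
        rw [← prod_inv_sqrt']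
        exact ENNReal.inv_le_inv' (ENNReal.ofReal_le_ofReal (Real.sqrt_le_sqrt hx))
    _ ≤ ∫⁻ x, ∏ i, (ENNReal.ofReal (Real.sqrt |x i|))⁻¹ ∂μ := setLIntegral_le_lintegral _ _
    _ = (∫⁻ y, (ENNReal.ofReal (Real.sqrt |y|))⁻¹ ∂ν) ^ d := lintegral_pi_prod_const' ν hf_meas
    _ = (ENNReal.ofReal 4) ^ d := by rw [hν, coord_integral']
  have hc0 : c ≠ 0 := (ENNReal.ofReal_pos.mpr (Real.sqrt_pos.mpr hε)).ne'
  have hμS : μ S ≤ (ENNReal.ofReal 4) ^ d * c := by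
    have h2 := mul_le_mul_left key c
    rwa [mul_assoc, ENNReal.inv_mul_cancel hc0 ENNReal.ofReal_ne_top, mul_one] at h2
  have h2ne0 : (ENNReal.ofReal 2) ^ d ≠ 0 := pow_ne_zero _ (by simp)
  have h2netop : (ENNReal.ofReal 2) ^ d ≠ ⊤ := ENNReal.pow_ne_top ENNReal.ofReal_ne_top
  calc cubeUnif d 1 S = ((ENNReal.ofReal 2) ^ d)⁻¹ * μ S := by
        rw [cubeUnif]
        simp only [Measure.smul_apply, smul_eq_mul, mul_one]
        rfl
  _ ≤ ((ENNReal.ofReal 2) ^ d)⁻¹ * ((ENNReal.ofReal 4) ^ d * c) := mul_le_mul_right hμS _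
  _ = (ENNReal.ofReal 2) ^ d * c := by
      rw [show (4:ℝ) = 2 * 2 by norm_num, ENNReal.ofReal_mul (by norm_num), mul_pow,
        ← mul_assoc, ← mul_assoc, ENNReal.inv_mul_cancel h2ne0 h2netop, one_mul]
  _ = ENNReal.ofReal (2 ^ d * Real.sqrt ε) := by
      rw [hc, ← ENNReal.ofReal_pow (by norm_num : (0:ℝ) ≤ 2),
        ← ENNReal.ofReal_mul (by positivity)]
end
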